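/- Let n ≥ p ≥ 1, let X be a real n×p matrix with XᵀX = I_p, let S = (Xᵀ⊗X)·Π, and set a = p(p−1)/2, c = (n−p)p, d = p(p+1)/2. Then there exists an orthogonal np×np real matrix Q such that simultaneously Qᵀ·(2I_{np} + (1/2)S − (1/2)S²)·Q = diag(I_a, 2I_{np−a}) and Qᵀ·(−2I_{np} + (1/2)S + (3/2)S²)·Q = diag(−I_a, −2I_c, O_d). -/

import Mathlib

open Matrix
open scoped Kronecker

/-- The commutation (vec-permutation) matrix `Π` with rows indexed by `Fin a × Fin b`
and columns by `Fin b × Fin a`; entry `((j,i),(i',j'))` is `1` iff `i = i'` and `j = j'`. -/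
def commMat (a b : ℕ) : Matrix (Fin a × Fin b) (Fin b × Fin a) ℝ :=
  fun r c => if r.1 = c.2 ∧ r.2 = c.1 then 1 else 0

/-- `S(X) = (Xᵀ ⊗ X) Π`. -/
noncomputable def Smat (n p : ℕ) (X : Matrix (Fin n) (Fin p) ℝ) :
    Matrix (Fin p × Fin n) (Fin p × Fin n) ℝ :=
  (Xᵀ ⊗ₖ X) * commMat n p

/-!
`S` is symmetric, and `S² = XᵀX ⊗ XXᵀ = I ⊗ XXᵀ` gives `S³ = S`, so every eigenvalue of `S`
is `-1`, `0` or `1`. The traces `tr S = tr(XᵀX) = p` and `tr S² = p²` then force the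
multiplicities `p(p-1)/2`, `np - p² = (n-p)p` and `p(p+1)/2`. An orthonormal eigenbasis of `S`
listed in this order diagonalizes every quadratic polynomial in `S`; the two polynomials take
the values `(1, -1)`, `(2, -2)`, `(2, 0)` at the eigenvalues `-1`, `0`, `1`.
-/

open Finset

section Smat

variable {n p : ℕ} (X : Matrix (Fin n) (Fin p) ℝ)

lemma smat_apply (i k : Fin p) (j l : Fin n) :
    Smat n p X (i, j) (k, l) = X l i * X j k := by
  simp [Smat, commMat, mul_apply, Fintype.sum_prod_type, ite_and]

lemma isHermitian_smat : (Smat n p X).IsHermitian := by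
  ext ⟨i, j⟩ ⟨k, l⟩
  simp only [conjTranspose_apply, smat_apply, star_trivial]
  ring

lemma smat_mul_smat : Smat n p X * Smat n p X = (Xᵀ * X) ⊗ₖ (X * Xᵀ) := by
  ext ⟨i, j⟩ ⟨k, l⟩
  simp only [mul_apply, Fintype.sum_prod_type, smat_apply, kroneckerMap_apply, transpose_apply,
    sum_mul_sum]
  rw [sum_comm]
  exact sum_congr rfl fun _ _ => sum_congr rfl fun _ _ => by ring

lemma smat_mul_smat_mul_smat (hX : Xᵀ * X = 1) :
    Smat n p X * Smat n p X * Smat n p X = Smat n p X := by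
  rw [smat_mul_smat, Smat, ← Matrix.mul_assoc, ← mul_kronecker_mul, hX, Matrix.one_mul,
    Matrix.mul_assoc, hX, Matrix.mul_one]

lemma trace_smat : (Smat n p X).trace = (Xᵀ * X).trace := by
  simp [trace, Fintype.sum_prod_type, smat_apply, mul_apply]

lemma trace_smat_mul_smat : (Smat n p X * Smat n p X).trace = (Xᵀ * X).trace ^ 2 := by
  rw [smat_mul_smat, trace_kronecker, trace_mul_comm X, sq]

end Smat

section Conjugation

variable {ι κ : Type*} [Fintype ι]

lemma transpose_submatrix_mul_mul_submatrix (V M : Matrix ι ι ℝ) (e : κ ≃ ι) :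
    (V.submatrix id e)ᵀ * M * V.submatrix id e = (Vᵀ * M * V).submatrix e e := by
  rw [submatrix_mul _ _ _ id _ Function.bijective_id,
    submatrix_mul _ _ _ id _ Function.bijective_id, submatrix_id_id, transpose_submatrix]

variable [DecidableEq ι] [Fintype κ] {Q : Matrix ι κ ℝ} {A : Matrix ι ι ℝ} {d : κ → ℝ}

lemma transpose_mul_mul_mul_of_mul_transpose (hQ : Q * Qᵀ = 1) (M N : Matrix ι ι ℝ) :
    Qᵀ * (M * N) * Q = (Qᵀ * M * Q) * (Qᵀ * N * Q) := by
  simp only [Matrix.mul_assoc, ← Matrix.mul_assoc Q Qᵀ, hQ, Matrix.one_mul]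

lemma trace_transpose_mul_mul_of_mul_transpose (hQ : Q * Qᵀ = 1) (M : Matrix ι ι ℝ) :
    (Qᵀ * M * Q).trace = M.trace := by
  rw [trace_mul_cycle, hQ, Matrix.one_mul]

variable [DecidableEq κ]

lemma sum_eq_trace_of_transpose_mul_mul_eq_diagonal (hQ : Q * Qᵀ = 1)
    (hA : Qᵀ * A * Q = diagonal d) : ∑ k, d k = A.trace := by
  rw [← trace_diagonal, ← hA, trace_transpose_mul_mul_of_mul_transpose hQ]

lemma sum_sq_eq_trace_mul_self_of_transpose_mul_mul_eq_diagonal (hQ : Q * Qᵀ = 1)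
    (hA : Qᵀ * A * Q = diagonal d) : ∑ k, d k ^ 2 = (A * A).trace := by
  rw [← trace_transpose_mul_mul_of_mul_transpose hQ, transpose_mul_mul_mul_of_mul_transpose hQ,
    hA, diagonal_mul_diagonal, trace_diagonal]
  simp only [sq]

lemma eq_neg_one_or_eq_zero_or_eq_one_of_transpose_mul_mul_eq_diagonal (hQ : Q * Qᵀ = 1)
    (hA : Qᵀ * A * Q = diagonal d) (hA3 : A * A * A = A) (k : κ) :
    d k = -1 ∨ d k = 0 ∨ d k = 1 := by
  have hcube : d k * d k * d k = d k := by
    have h := congrArg (Qᵀ * · * Q) hA3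
    simp only [transpose_mul_mul_mul_of_mul_transpose hQ, hA, diagonal_mul_diagonal] at h
    simpa using congrFun₂ h k k
  have : (d k + 1) * d k * (d k - 1) = 0 := by linear_combination hcube
  rcases mul_eq_zero.1 this with h | h
  · rcases mul_eq_zero.1 h with h | h
    · exact Or.inl (by linarith)
    · exact Or.inr (Or.inl h)
  · exact Or.inr (Or.inr (by linarith))

lemma transpose_mul_quadratic_mul_eq_diagonal (hQ : Q * Qᵀ = 1) (hQ' : Qᵀ * Q = 1)
    (hA : Qᵀ * A * Q = diagonal d) (α β γ : ℝ) :
    Qᵀ * (α • 1 + β • A + γ • (A * A)) * Q = diagonal fun k => α + β * d k + γ * d k ^ 2 := by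
  simp only [Matrix.mul_add, Matrix.add_mul, Matrix.mul_smul, Matrix.smul_mul, Matrix.mul_one,
    hQ', transpose_mul_mul_mul_of_mul_transpose hQ, hA, diagonal_mul_diagonal]
  ext i j
  rcases eq_or_ne i j with rfl | hij
  · simp [sq]
  · simp [hij]

end Conjugation

lemma Matrix.IsHermitian.exists_orthogonal_transpose_mul_mul_eq_diagonal {ι : Type*} [Fintype ι]
    [DecidableEq ι] {A : Matrix ι ι ℝ} (hA : A.IsHermitian) :
    ∃ V : Matrix ι ι ℝ, Vᵀ * V = 1 ∧ V * Vᵀ = 1 ∧ Vᵀ * A * V = diagonal hA.eigenvalues := by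
  have hV := hA.eigenvectorUnitary.2
  refine ⟨hA.eigenvectorUnitary, ?_, ?_, ?_⟩
  · simpa [star_eq_conjTranspose] using mem_unitaryGroup_iff'.1 hV
  · simpa [star_eq_conjTranspose] using mem_unitaryGroup_iff.1 hV
  · simpa [star_eq_conjTranspose] using hA.conjStarAlgAut_star_eigenvectorUnitary

section Trichotomous

variable {α : Type*} [Fintype α] {f : α → ℝ}

lemma card_filter_eq_neg_one_add_card_filter_eq_zero_add_card_filter_eq_one
    (hf : ∀ a, f a = -1 ∨ f a = 0 ∨ f a = 1) :
    #{a | f a = -1} + #{a | f a = 0} + #{a | f a = 1} = Fintype.card α := by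
  have h : ∀ a, (if f a = -1 then 1 else 0) + (if f a = 0 then 1 else 0)
      + (if f a = 1 then 1 else 0) = (1 : ℕ) := by
    intro a; rcases hf a with h | h | h <;> norm_num [h]
  simpa only [sum_add_distrib, sum_boole, Nat.cast_id, sum_const, smul_eq_mul, mul_one, card_univ]
    using sum_congr rfl fun a (_ : a ∈ univ) => h a

lemma sum_eq_card_filter_eq_one_sub_card_filter_eq_neg_one
    (hf : ∀ a, f a = -1 ∨ f a = 0 ∨ f a = 1) :
    ∑ a, f a = #{a | f a = 1} - #{a | f a = -1} := by
  have h : ∀ a, f a = (if f a = 1 then 1 else 0) - (if f a = -1 then 1 else 0) := by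
    intro a; rcases hf a with h | h | h <;> norm_num [h]
  rw [sum_congr rfl fun a _ => h a, sum_sub_distrib, sum_boole, sum_boole]

lemma sum_sq_eq_card_filter_eq_one_add_card_filter_eq_neg_one
    (hf : ∀ a, f a = -1 ∨ f a = 0 ∨ f a = 1) :
    ∑ a, f a ^ 2 = #{a | f a = 1} + #{a | f a = -1} := by
  have h : ∀ a, f a ^ 2 = (if f a = 1 then 1 else 0) + (if f a = -1 then 1 else 0) := by
    intro a; rcases hf a with h | h | h <;> norm_num [h]
  rw [sum_congr rfl fun a _ => h a, sum_add_distrib, sum_boole, sum_boole]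

lemma exists_equiv_of_card_filter_eq {β : Type*} [Fintype β] {g : β → ℝ}
    (hf : ∀ a, f a = -1 ∨ f a = 0 ∨ f a = 1) (hg : ∀ b, g b = -1 ∨ g b = 0 ∨ g b = 1)
    (hcard : Fintype.card α = Fintype.card β) (hneg : #{a | f a = -1} = #{b | g b = -1})
    (hzero : #{a | f a = 0} = #{b | g b = 0}) :
    ∃ e : α ≃ β, ∀ a, g (e a) = f a := by
  classical
  have hfiber : ∀ v, #{a | f a = v} = #{b | g b = v} := by
    intro v
    have hf3 := card_filter_eq_neg_one_add_card_filter_eq_zero_add_card_filter_eq_one hf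
    have hg3 := card_filter_eq_neg_one_add_card_filter_eq_zero_add_card_filter_eq_one hg
    by_cases hv : v = -1 ∨ v = 0 ∨ v = 1
    · rcases hv with rfl | rfl | rfl <;> omega
    · have hf0 : #{a | f a = v} = 0 := card_eq_zero.2 <| filter_eq_empty_iff.2 fun a _ h =>
        hv (h ▸ hf a)
      have hg0 : #{b | g b = v} = 0 := card_eq_zero.2 <| filter_eq_empty_iff.2 fun b _ h =>
        hv (h ▸ hg b)
      rw [hf0, hg0]
  exact ⟨Equiv.ofFiberEquiv fun v => Fintype.equivOfCardEq <| by
    simpa only [Fintype.card_subtype] using hfiber v, Equiv.ofFiberEquiv_map _⟩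

end Trichotomous

def blockSign (a c i : ℕ) : ℝ := if i < a then -1 else if i < a + c then 0 else 1

lemma blockSign_eq_neg_one_or_eq_zero_or_eq_one (a c i : ℕ) :
    blockSign a c i = -1 ∨ blockSign a c i = 0 ∨ blockSign a c i = 1 := by
  unfold blockSign; split_ifs <;> simp

lemma card_filter_blockSign_eq_neg_one {N a : ℕ} (c : ℕ) (h : a ≤ N) :
    #{i : Fin N | blockSign a c i = -1} = a := by
  have : ∀ i : ℕ, blockSign a c i = -1 ↔ i < a := by
    intro i; unfold blockSign; split_ifs <;> norm_num [*]
  simp only [this, Fin.card_filter_val_lt, min_eq_right h]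

lemma card_filter_blockSign_eq_zero {N a c : ℕ} (h : a + c ≤ N) :
    #{i : Fin N | blockSign a c i = 0} = c := by
  have : ∀ i : ℕ, blockSign a c i = 0 ↔ a ≤ i ∧ i < a + c := by
    intro i; unfold blockSign; split_ifs <;> norm_num <;> omega
  have hsdiff : univ.filter (fun i : Fin N => blockSign a c i = 0)
      = univ.filter (fun i : Fin N => (i : ℕ) < a + c)
        \ univ.filter (fun i : Fin N => (i : ℕ) < a) := by
    ext i; simp only [this, mem_sdiff, mem_filter, mem_univ, true_and]; omega
  rw [hsdiff, card_sdiff_of_subset fun i hi => by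
    simp only [mem_filter, mem_univ, true_and] at hi ⊢; omega,
    Fin.card_filter_val_lt, Fin.card_filter_val_lt]
  omega

lemma exists_equiv_blockSign_of_sum_eq {ι : Type*} [Fintype ι] {d : ι → ℝ}
    (hd : ∀ i, d i = -1 ∨ d i = 0 ∨ d i = 1) {p N : ℕ} (hN : Fintype.card ι = N)
    (hsum : ∑ i, d i = p) (hsq : ∑ i, d i ^ 2 = p ^ 2) :
    ∃ e : Fin N ≃ ι, ∀ k, d (e k) = blockSign (p * (p - 1) / 2) (N - p * p) k := by
  have hcard := card_filter_eq_neg_one_add_card_filter_eq_zero_add_card_filter_eq_one hd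
  rw [sum_eq_card_filter_eq_one_sub_card_filter_eq_neg_one hd] at hsum
  rw [sum_sq_eq_card_filter_eq_one_add_card_filter_eq_neg_one hd] at hsq
  have hone : #{i | d i = 1} = #{i | d i = -1} + p := by
    exact_mod_cast (by linarith : (#{i | d i = 1} : ℝ) = #{i | d i = -1} + p)
  have hneg : 2 * #{i | d i = -1} + p = p * p := by
    exact_mod_cast (by linarith : 2 * (#{i | d i = -1} : ℝ) + p = p * p)
  have hpp : p * (p - 1) = p * p - p := Nat.mul_sub_one p p
  exact exists_equiv_of_card_filter_eq
    (f := fun k : Fin N => blockSign (p * (p - 1) / 2) (N - p * p) k)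
    (fun k => blockSign_eq_neg_one_or_eq_zero_or_eq_one _ _ k) hd
    (by rw [Fintype.card_fin, hN])
    (by rw [card_filter_blockSign_eq_neg_one _ (by omega)]; omega)
    (by rw [card_filter_blockSign_eq_zero (by omega)]; omega)

theorem stmt8 (n p : ℕ)
    (X : Matrix (Fin n) (Fin p) ℝ) (hX : Xᵀ * X = 1) :
    ∃ Q : Matrix (Fin p × Fin n) (Fin (n * p)) ℝ, Qᵀ * Q = 1 ∧ Q * Qᵀ = 1 ∧
      Qᵀ * ((2 : ℝ) • (1 : Matrix (Fin p × Fin n) (Fin p × Fin n) ℝ)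
            + (1 / 2 : ℝ) • Smat n p X - (1 / 2 : ℝ) • (Smat n p X * Smat n p X)) * Q
        = Matrix.diagonal (fun i : Fin (n * p) =>
            if (i : ℕ) < p * (p - 1) / 2 then (1 : ℝ) else 2) ∧
      Qᵀ * ((-2 : ℝ) • (1 : Matrix (Fin p × Fin n) (Fin p × Fin n) ℝ)
            + (1 / 2 : ℝ) • Smat n p X + (3 / 2 : ℝ) • (Smat n p X * Smat n p X)) * Q
        = Matrix.diagonal (fun i : Fin (n * p) =>
            if (i : ℕ) < p * (p - 1) / 2 then (-1 : ℝ)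
            else if (i : ℕ) < p * (p - 1) / 2 + (n - p) * p then -2 else 0) := by
  obtain ⟨V, hVV, hVV', hV⟩ := (isHermitian_smat X).exists_orthogonal_transpose_mul_mul_eq_diagonal
  have htrace : (Xᵀ * X).trace = p := by simp [hX]
  obtain ⟨e, he⟩ := exists_equiv_blockSign_of_sum_eq (N := n * p)
    (eq_neg_one_or_eq_zero_or_eq_one_of_transpose_mul_mul_eq_diagonal hVV' hV
      (smat_mul_smat_mul_smat X hX))
    (by simp [Nat.mul_comm])
    (by rw [sum_eq_trace_of_transpose_mul_mul_eq_diagonal hVV' hV, trace_smat, htrace])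
    (by rw [sum_sq_eq_trace_mul_self_of_transpose_mul_mul_eq_diagonal hVV' hV,
      trace_smat_mul_smat, htrace])
  have hQ : (V.submatrix id e)ᵀ * V.submatrix id e = 1 := by
    simpa [hVV] using transpose_submatrix_mul_mul_submatrix V 1 e
  have hQ' : V.submatrix id e * (V.submatrix id e)ᵀ = 1 := by
    rw [transpose_submatrix, submatrix_mul_equiv, submatrix_id_id, hVV']
  have hD : (V.submatrix id e)ᵀ * Smat n p X * V.submatrix id e
      = diagonal fun k : Fin (n * p) => blockSign (p * (p - 1) / 2) ((n - p) * p) k := by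
    rw [transpose_submatrix_mul_mul_submatrix, hV, submatrix_diagonal_equiv, Nat.sub_mul]
    exact congrArg diagonal (funext he)
  refine ⟨V.submatrix id e, hQ, hQ', ?_, ?_⟩
  · rw [sub_eq_add_neg, ← neg_smul, transpose_mul_quadratic_mul_eq_diagonal hQ' hQ hD]
    congr 1; funext k; unfold blockSign; split_ifs <;> norm_num
  · rw [transpose_mul_quadratic_mul_eq_diagonal hQ' hQ hD]
    congr 1; funext k; unfold blockSign; split_ifs <;> norm_num
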